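/- Under the standing assumptions on φ and φ_λ, let 𝒟 := {x ∈ H : ∃ z ∈ ℝ^m with S(x,z) < h(x)}. Then for every sequence λ_k → 0⁺ and every sequence x_k converging strongly to a point x ∈ 𝒟, lim_{k→∞} φ_{λ_k}(x_k) = φ(x). (Theorem 3.1(c).) -/

import Mathlib

/-!
The support function of the weak*-compact set `C` is Lipschitz by Banach–Steinhaus, so `S` is
continuous, and as a supremum of convex scalarizations it is convex. By Hahn–Banach, `S` has
continuous affine minorants `l + c` coming arbitrarily close to `S` at any given point, and each
of them gives `l + c - λ ‖l‖² ≤ M_λ S ≤ S`; hence `M_{λ_k} S (x_k, z) → S (x₀, z)` for every `z`.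
So the events `{M_{λ_k} S (x_k, ξ) ≤ h (x_k)}` converge to `{S (x₀, ξ) ≤ h (x₀)}` outside
`{S (x₀, ξ) = h (x₀)}`. Under the Slater condition that level set lies in the boundary of the
convex set `{S (x₀, ·) < h (x₀)}`, which is Lebesgue-null, and the law of `ξ` has a density.
-/

open Filter Topology MeasureTheory

/-- The Moreau envelope of a function `S : H × E → ℝ` (in two arguments) with parameter
`lam`, for the Hilbert norm of the product. -/
noncomputable def moreauEnv2 {H E : Type*} [NormedAddCommGroup H] [InnerProductSpace ℝ H]
    [NormedAddCommGroup E] [InnerProductSpace ℝ E]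
    (S : H → E → ℝ) (lam : ℝ) (x : H) (z : E) : ℝ :=
  ⨅ u : H × E, (S u.1 u.2 + (‖x - u.1‖ ^ 2 + ‖z - u.2‖ ^ 2) / (2 * lam))

/-- Weak (sequential) convergence in a Hilbert space: `⟪x_k, y⟫ → ⟪x₀, y⟫` for every `y`. -/
def WeakSeqTendsto {H : Type*} [NormedAddCommGroup H] [InnerProductSpace ℝ H]
    (x : ℕ → H) (x₀ : H) : Prop :=
  ∀ y : H, Tendsto (fun k => (inner ℝ (x k) y : ℝ)) atTop (𝓝 (inner ℝ x₀ y))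

open Set

lemma eventually_le_iff_of_tendsto {ι α : Type*} [LinearOrder α] [TopologicalSpace α]
    [OrderClosedTopology α] {F : Filter ι} {f g : ι → α} {a b : α}
    (hf : Tendsto f F (𝓝 a)) (hg : Tendsto g F (𝓝 b)) (hab : a ≠ b) :
    ∀ᶠ i in F, f i ≤ g i ↔ a ≤ b := by
  rcases hab.lt_or_gt with hlt | hgt
  · exact (hf.eventually_lt hg hlt).mono fun i hi => iff_of_true hi.le hlt.le
  · exact (hg.eventually_lt hf hgt).mono fun i hi => iff_of_false hi.not_ge hgt.not_ge

lemma convexOn_ciSup {ι E : Type*} [Nonempty ι] [AddCommMonoid E] [Module ℝ E] {s : Set E}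
    {f : ι → E → ℝ} (hf : ∀ i, ConvexOn ℝ s (f i))
    (hbdd : ∀ x ∈ s, BddAbove (range fun i => f i x)) :
    ConvexOn ℝ s fun x => ⨆ i, f i x := by
  obtain ⟨i₀⟩ := ‹Nonempty ι›
  refine ⟨(hf i₀).1, fun x hx y hy a b ha hb hab => ciSup_le fun i => ?_⟩
  exact ((hf i).2 hx hy ha hb hab).trans <| add_le_add
    (smul_le_smul_of_nonneg_left (le_ciSup (hbdd x hx) i) ha)
    (smul_le_smul_of_nonneg_left (le_ciSup (hbdd y hy) i) hb)

lemma ConvexOn.exists_affine_le_of_lt_univ {W : Type*} [NormedAddCommGroup W] [NormedSpace ℝ W]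
    {f : W → ℝ} (hf : ConvexOn ℝ univ f) (hfc : LowerSemicontinuous f) {w : W} {a : ℝ}
    (ha : a < f w) : ∃ (l : W →L[ℝ] ℝ) (c : ℝ), (∀ v, l v + c ≤ f v) ∧ l w + c = a := by
  obtain ⟨l, c, hle, heq⟩ := hf.exists_affine_le_of_lt (𝕜 := ℝ) (mem_univ w) ha isClosed_univ
    (hfc.lowerSemicontinuousOn univ)
  exact ⟨l, c, fun v => by simpa using hle ⟨v, mem_univ v⟩, by simpa using heq⟩

lemma ConvexOn.addHaar_setOf_eq_eq_zero {E : Type*} [NormedAddCommGroup E] [NormedSpace ℝ E]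
    [MeasurableSpace E] [BorelSpace E] [FiniteDimensional ℝ E] (μ : Measure E)
    [μ.IsAddHaarMeasure] {g : E → ℝ} (hg : ConvexOn ℝ univ g) {z₀ : E} {c : ℝ}
    (hz₀ : g z₀ < c) : μ {z | g z = c} = 0 := by
  have hU : Convex ℝ {z | g z < c} := by simpa using hg.convex_lt c
  refine measure_mono_null (fun z (hz : g z = c) => ?_) (hU.addHaar_frontier μ)
  refine ⟨?_, fun hint => ?_⟩
  · refine segment_subset_closure_openSegment.trans (closure_mono fun p hp => ?_)
      (right_mem_segment ℝ z₀ z)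
    by_contra hcp
    replace hcp : c ≤ g p := not_lt.mp hcp
    rw [openSegment_symm] at hp
    exact (hg.lt_left_of_right_lt trivial trivial hp (hz₀.trans_le hcp)).not_ge (hz ▸ hcp)
  · exact (interior_subset (s := {z | g z < c}) hint).ne hz

lemma ConvexOn.ae_ne_of_map_absolutelyContinuous {Ω E : Type*} [MeasurableSpace Ω]
    {P : Measure Ω} [NormedAddCommGroup E] [NormedSpace ℝ E] [MeasurableSpace E] [BorelSpace E]
    [FiniteDimensional ℝ E] {μ : Measure E} [μ.IsAddHaarMeasure] {ξ : Ω → E}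
    (hξ : AEMeasurable ξ P) (hlaw : P.map ξ ≪ μ) {g : E → ℝ} (hg : ConvexOn ℝ univ g) {z₀ : E}
    {c : ℝ} (hz₀ : g z₀ < c) : ∀ᵐ ω ∂P, g (ξ ω) ≠ c :=
  ae_of_ae_map (p := fun z => g z ≠ c) hξ <| hlaw.ae_le <| ae_iff.2 <| by
    simpa using hg.addHaar_setOf_eq_eq_zero μ hz₀

lemma IsCompact.bddAbove_range_subtype {X : Type*} [TopologicalSpace X] {C : Set X}
    (hC : IsCompact C) {f : X → ℝ} (hf : Continuous f) : BddAbove (range fun v : C => f v) :=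
  image_eq_range f C ▸ hC.bddAbove_image hf.continuousOn

section WeakDual

variable {Y : Type*} [NormedAddCommGroup Y] [NormedSpace ℝ Y] {C : Set (WeakDual ℝ Y)}

lemma IsCompact.convexOn_ciSup_weakDual_apply_add [Nonempty C] {W : Type*} [AddCommMonoid W]
    [Module ℝ W] {s : Set W} (hC : IsCompact C) {f : W → Y} {g : W → ℝ}
    (hfg : ∀ v ∈ C, ConvexOn ℝ s fun w => v (f w) + g w) :
    ConvexOn ℝ s fun w => ⨆ v : C, ((v : WeakDual ℝ Y) (f w) + g w) :=
  convexOn_ciSup (fun v => hfg v v.2) fun _ _ =>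
    hC.bddAbove_range_subtype ((WeakDual.eval_continuous _).add continuous_const)

variable [CompleteSpace Y]

lemma IsCompact.exists_norm_toStrongDual_le (hC : IsCompact C) :
    ∃ M, ∀ v : C, ‖WeakDual.toStrongDual (v : WeakDual ℝ Y)‖ ≤ M := by
  refine banach_steinhaus fun y => ?_
  obtain ⟨M, hM⟩ := hC.bddAbove_range_subtype (WeakDual.eval_continuous y).norm
  exact ⟨M, fun v => hM ⟨v, rfl⟩⟩

lemma IsCompact.continuous_iSup_weakDual_apply (hC : IsCompact C) :
    Continuous fun y : Y => ⨆ v : C, (v : WeakDual ℝ Y) y := by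
  cases isEmpty_or_nonempty C
  · simp only [Real.iSup_of_isEmpty]
    exact continuous_const
  obtain ⟨M, hM⟩ := hC.exists_norm_toStrongDual_le
  refine (LipschitzWith.of_le_add_mul' M fun y y' => ciSup_le fun v => ?_).continuous
  have hv : (v : WeakDual ℝ Y) (y - y') ≤ M * dist y y' := by
    rw [dist_eq_norm]
    exact (Real.le_norm_self _).trans <|
      ((WeakDual.toStrongDual (v : WeakDual ℝ Y)).le_opNorm _).trans <|
      mul_le_mul_of_nonneg_right (hM v) (norm_nonneg _)
  have hv' := le_ciSup (hC.bddAbove_range_subtype (WeakDual.eval_continuous y')) v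
  rw [map_sub] at hv
  linarith

lemma IsCompact.continuous_ciSup_weakDual_apply_add [Nonempty C] {W : Type*}
    [TopologicalSpace W] (hC : IsCompact C) {f : W → Y} (hf : Continuous f) {g : W → ℝ}
    (hg : Continuous g) : Continuous fun w => ⨆ v : C, ((v : WeakDual ℝ Y) (f w) + g w) := by
  simp_rw [← ciSup_add (hC.bddAbove_range_subtype (WeakDual.eval_continuous _))]
  exact (hC.continuous_iSup_weakDual_apply.comp hf).add hg

end WeakDual

lemma mul_le_sq_div_add {lam : ℝ} (hlam : 0 < lam) (a t : ℝ) :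
    a * t ≤ t ^ 2 / (2 * lam) + lam * a ^ 2 / 2 := by
  rw [div_add_div _ _ (by positivity) two_ne_zero, le_div_iff₀ (by positivity)]
  nlinarith [sq_nonneg (t - lam * a)]

section MoreauEnvelope

variable {H E : Type*} [NormedAddCommGroup H] [InnerProductSpace ℝ H]
  [NormedAddCommGroup E] [InnerProductSpace ℝ E] {S : H → E → ℝ} {l : H × E →L[ℝ] ℝ} {c lam : ℝ}

/-- The norm of `H × E` is the sup norm, so the two coordinates are estimated separately,
each at the cost `lam * ‖l‖ ^ 2 / 2`. -/
lemma affine_sub_le_moreauEnv2_term (hl : ∀ u : H × E, l u + c ≤ S u.1 u.2) (hlam : 0 < lam)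
    (x : H) (z : E) (u : H × E) :
    l (x, z) + c - lam * ‖l‖ ^ 2 ≤ S u.1 u.2 + (‖x - u.1‖ ^ 2 + ‖z - u.2‖ ^ 2) / (2 * lam) := by
  have hsplit : l (x, z) = l u + l (x - u.1, 0) + l (0, z - u.2) := by
    rw [← map_add, ← map_add]
    congr 1
    ext <;> simp
  have hcoord : ∀ v : H × E, l v ≤ ‖l‖ * ‖v‖ := fun v =>
    (Real.le_norm_self _).trans (l.le_opNorm v)
  have h₁ := hcoord (x - u.1, 0)
  have h₂ := hcoord (0, z - u.2)
  simp only [Prod.norm_mk, norm_zero, norm_nonneg, max_eq_left, max_eq_right] at h₁ h₂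
  have q₁ := mul_le_sq_div_add hlam ‖l‖ ‖x - u.1‖
  have q₂ := mul_le_sq_div_add hlam ‖l‖ ‖z - u.2‖
  have hu := hl u
  rw [add_div]
  linarith

lemma bddBelow_range_moreauEnv2_term (hl : ∀ u : H × E, l u + c ≤ S u.1 u.2) (hlam : 0 < lam)
    (x : H) (z : E) :
    BddBelow (range fun u : H × E => S u.1 u.2 + (‖x - u.1‖ ^ 2 + ‖z - u.2‖ ^ 2) / (2 * lam)) :=
  ⟨_, forall_mem_range.2 (affine_sub_le_moreauEnv2_term hl hlam x z)⟩

lemma affine_sub_le_moreauEnv2 (hl : ∀ u : H × E, l u + c ≤ S u.1 u.2) (hlam : 0 < lam)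
    (x : H) (z : E) : l (x, z) + c - lam * ‖l‖ ^ 2 ≤ moreauEnv2 S lam x z :=
  le_ciInf (affine_sub_le_moreauEnv2_term hl hlam x z)

lemma moreauEnv2_le (hl : ∀ u : H × E, l u + c ≤ S u.1 u.2) (hlam : 0 < lam) (x : H) (z : E) :
    moreauEnv2 S lam x z ≤ S x z :=
  (ciInf_le (bddBelow_range_moreauEnv2_term hl hlam x z) (x, z)).trans_eq (by simp)

lemma upperSemicontinuous_moreauEnv2 (hl : ∀ u : H × E, l u + c ≤ S u.1 u.2) (hlam : 0 < lam)
    (x : H) : UpperSemicontinuous (moreauEnv2 S lam x) :=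
  upperSemicontinuous_ciInf (bddBelow_range_moreauEnv2_term hl hlam x) fun _ =>
    (by fun_prop : Continuous _).upperSemicontinuous

theorem tendsto_moreauEnv2 (hS : ConvexOn ℝ univ fun u : H × E => S u.1 u.2)
    (hSc : Continuous fun u : H × E => S u.1 u.2) {ι : Type*} {F : Filter ι} {lam : ι → ℝ}
    (hlam : ∀ i, 0 < lam i) (hlam0 : Tendsto lam F (𝓝 0)) {x : ι → H} {x₀ : H}
    (hx : Tendsto x F (𝓝 x₀)) (z : E) :
    Tendsto (fun i => moreauEnv2 S (lam i) (x i) z) F (𝓝 (S x₀ z)) := by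
  have hxz : Tendsto (fun i => (x i, z)) F (𝓝 (x₀, z)) := hx.prodMk_nhds tendsto_const_nhds
  refine tendsto_order.2 ⟨fun b hb => ?_, fun b hb => ?_⟩
  · obtain ⟨a, hba, ha⟩ := exists_between hb
    obtain ⟨l, c, hl, hla⟩ :=
      hS.exists_affine_le_of_lt_univ hSc.lowerSemicontinuous (w := (x₀, z)) ha
    have hlim : Tendsto (fun i => l (x i, z) + c - lam i * ‖l‖ ^ 2) F (𝓝 a) := by
      rw [← hla, ← sub_zero (l (x₀, z) + c), ← zero_mul (‖l‖ ^ 2)]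
      exact (((l.continuous.tendsto _).comp hxz).add_const c).sub (hlam0.mul_const _)
    filter_upwards [hlim.eventually (lt_mem_nhds hba)] with i hi
    exact hi.trans_le (affine_sub_le_moreauEnv2 hl (hlam i) (x i) z)
  · obtain ⟨l, c, hl, -⟩ :=
      hS.exists_affine_le_of_lt_univ hSc.lowerSemicontinuous (w := (x₀, z)) (sub_one_lt _)
    filter_upwards [((hSc.tendsto _).comp hxz).eventually (gt_mem_nhds hb)] with i hi
    exact (moreauEnv2_le hl (hlam i) (x i) z).trans_lt hi

end MoreauEnvelope

theorem stmt7_general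
    {H Y : Type*} [NormedAddCommGroup H] [InnerProductSpace ℝ H]
    [NormedAddCommGroup Y] [NormedSpace ℝ Y] [CompleteSpace Y] {m : ℕ}
    {Ω : Type*} [MeasurableSpace Ω] (P : Measure Ω) [IsProbabilityMeasure P]
    (ξ : Ω → EuclideanSpace ℝ (Fin m)) (hξ : Measurable ξ)
    (hlaw : P.map ξ ≪ volume)
    (C : Set (WeakDual ℝ Y)) (hCne : C.Nonempty) (hCcpt : IsCompact C)
    (Φ : H → EuclideanSpace ℝ (Fin m) → Y)
    (hΦ : Continuous fun q : H × EuclideanSpace ℝ (Fin m) => Φ q.1 q.2)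
    (h : H → ℝ) (hC1 : ContDiff ℝ 1 h)
    (hscal : ∀ v ∈ C, ConvexOn ℝ Set.univ
      (fun q : H × EuclideanSpace ℝ (Fin m) => v (Φ q.1 q.2) + h q.1))
    (S : H → EuclideanSpace ℝ (Fin m) → ℝ)
    (hS : ∀ x z, S x z = ⨆ v : C, ((v : WeakDual ℝ Y) (Φ x z) + h x))
    (φ : H → ℝ)
    (hφ : ∀ x, φ x = (P {ω | S x (ξ ω) ≤ h x}).toReal)
    (φl : ℝ → H → ℝ)
    (hφl : ∀ lam x, φl lam x = (P {ω | moreauEnv2 S lam x (ξ ω) ≤ h x}).toReal)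
    :
    ∀ lam : ℕ → ℝ, (∀ k, 0 < lam k) → Tendsto lam atTop (𝓝 0) →
    ∀ (x : ℕ → H) (x₀ : H), Tendsto x atTop (𝓝 x₀) →
      (∃ z : EuclideanSpace ℝ (Fin m), S x₀ z < h x₀) →
      Tendsto (fun k => φl (lam k) (x k)) atTop (𝓝 (φ x₀)) := by
  rintro lam hlam hlam0 x x₀ hx ⟨z₀, hz₀⟩
  have : Nonempty C := hCne.to_subtype
  have hSfun : (fun q : H × EuclideanSpace ℝ (Fin m) => S q.1 q.2) =
      fun q => ⨆ v : C, ((v : WeakDual ℝ Y) (Φ q.1 q.2) + h q.1) := funext fun q => hS q.1 q.2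
  have hScont : Continuous fun q : H × EuclideanSpace ℝ (Fin m) => S q.1 q.2 :=
    hSfun ▸ hCcpt.continuous_ciSup_weakDual_apply_add hΦ (hC1.continuous.comp continuous_fst)
  have hSconv : ConvexOn ℝ univ fun q : H × EuclideanSpace ℝ (Fin m) => S q.1 q.2 :=
    hSfun ▸ hCcpt.convexOn_ciSup_weakDual_apply_add hscal
  obtain ⟨l, c, hl, -⟩ :=
    hSconv.exists_affine_le_of_lt_univ hScont.lowerSemicontinuous (w := (x₀, z₀)) (sub_one_lt _)
  have hslice : ConvexOn ℝ univ (S x₀) :=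
    hSconv.comp_affineMap ((AffineMap.const ℝ _ x₀).prod (AffineMap.id ℝ _))
  have hlevel : ∀ᵐ ω ∂P, S x₀ (ξ ω) ≠ h x₀ :=
    hslice.ae_ne_of_map_absolutelyContinuous hξ.aemeasurable hlaw hz₀
  have hevents : ∀ᵐ ω ∂P, ∀ᶠ k in atTop,
      moreauEnv2 S (lam k) (x k) (ξ ω) ≤ h (x k) ↔ S x₀ (ξ ω) ≤ h x₀ :=
    hlevel.mono fun ω hω => eventually_le_iff_of_tendsto
      (tendsto_moreauEnv2 hSconv hScont hlam hlam0 hx (ξ ω))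
      ((hC1.continuous.tendsto x₀).comp hx) hω
  have hmeas : ∀ k, MeasurableSet {ω | moreauEnv2 S (lam k) (x k) (ξ ω) ≤ h (x k)} := fun k =>
    measurableSet_le ((upperSemicontinuous_moreauEnv2 hl (hlam k) (x k)).measurable.comp hξ)
      measurable_const
  simp_rw [hφl, hφ]
  exact (ENNReal.tendsto_toReal (measure_ne_top _ _)).comp <|
    tendsto_measure_of_ae_tendsto_indicator_of_isFiniteMeasure atTop
      (measurableSet_le ((hScont.comp (.prodMk_right x₀)).measurable.comp hξ) measurable_const)
      hmeas hevents

/-- Theorem 3.1(c): if `x ∈ 𝒟 = {x | ∃ z, S(x,z) < h(x)}`, then for any `λ_k → 0⁺` and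
`x_k → x` strongly, `φ_{λ_k}(x_k) → φ(x)`. -/
theorem stmt7
    {H Y : Type*} [NormedAddCommGroup H] [InnerProductSpace ℝ H] [CompleteSpace H]
    [SecondCountableTopology H]
    [NormedAddCommGroup Y] [NormedSpace ℝ Y] [CompleteSpace Y] {m : ℕ}
    {Ω : Type*} [MeasurableSpace Ω] (P : Measure Ω) [IsProbabilityMeasure P]
    (ξ : Ω → EuclideanSpace ℝ (Fin m)) (hξ : Measurable ξ)
    (hlaw : P.map ξ ≪ volume)
    (K : Set Y) (hKne : K.Nonempty) (hKcl : IsClosed K) (hKconv : Convex ℝ K)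
    (hKcone : ∀ c : ℝ, 0 ≤ c → ∀ y ∈ K, c • y ∈ K)
    (C : Set (WeakDual ℝ Y)) (hCne : C.Nonempty) (hCconv : Convex ℝ C) (hCcpt : IsCompact C)
    (hCgen : closure {w : WeakDual ℝ Y | ∃ c : ℝ, 0 ≤ c ∧ ∃ v ∈ C, w = c • v}
      = {w : WeakDual ℝ Y | ∀ y ∈ K, 0 ≤ w y})
    (Φ : H → EuclideanSpace ℝ (Fin m) → Y)
    (hΦ : Continuous fun q : H × EuclideanSpace ℝ (Fin m) => Φ q.1 q.2)
    (h : H → ℝ) (hconv : ConvexOn ℝ Set.univ h) (hC1 : ContDiff ℝ 1 h)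
    (hscal : ∀ v ∈ C, ConvexOn ℝ Set.univ
      (fun q : H × EuclideanSpace ℝ (Fin m) => v (Φ q.1 q.2) + h q.1))
    (S : H → EuclideanSpace ℝ (Fin m) → ℝ)
    (hS : ∀ x z, S x z = ⨆ v : C, ((v : WeakDual ℝ Y) (Φ x z) + h x))
    (φ : H → ℝ)
    (hφ : ∀ x, φ x = (P {ω | S x (ξ ω) ≤ h x}).toReal)
    (φl : ℝ → H → ℝ)
    (hφl : ∀ lam x, φl lam x = (P {ω | moreauEnv2 S lam x (ξ ω) ≤ h x}).toReal)
    :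
    ∀ lam : ℕ → ℝ, (∀ k, 0 < lam k) → Tendsto lam atTop (𝓝 0) →
    ∀ (x : ℕ → H) (x₀ : H), Tendsto x atTop (𝓝 x₀) →
      (∃ z : EuclideanSpace ℝ (Fin m), S x₀ z < h x₀) →
      Tendsto (fun k => φl (lam k) (x k)) atTop (𝓝 (φ x₀)) :=
  stmt7_general P ξ hξ hlaw C hCne hCcpt Φ hΦ h hC1 hscal S hS φ hφ φl hφl
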